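/- Let U be a unitary on (ℂ²)^{⊗n} with Pauli coefficients α_s, and suppose Ũ is an operator with ‖U − Ũ‖_{2,P}² ≤ ε/4 and ‖Ũ‖_{1,P} = L₁. Let S' = {s : |α̃_s| ≥ ε/(4L₁)} where α̃_s are the Pauli coefficients of Ũ, and V = Σ_{s∈S'} α̃_s σ^s. Then |S'| ≤ 4L₁²/ε, ‖Ũ − V‖_{2,P}² ≤ ε/4, and ‖U − V‖_{2,P}² ≤ ε. -/

import Mathlib

/-! Pauli operators are orthogonal for the trace form, `Tr(σ^t σ^s) = 2^n δ_{ts}`, so `V` has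
exactly the Pauli coefficients of `Ũ` on `S'` and `Ũ - V` exactly those off `S'`. Everything then
concerns the single coefficient sequence `α̃`: Markov's inequality bounds `|S'|`, every discarded
coefficient satisfies `|α̃_s|² ≤ τ |α̃_s|` with `τ = ε / 4L₁`, and `(a + b)² ≤ 2(a² + b²)` combines
the two errors. -/

open Matrix BigOperators
open scoped Kronecker ComplexOrder

noncomputable def pauli1 : Fin 4 → Matrix (Fin 2) (Fin 2) ℂ
  | 0 => 1
  | 1 => !![0, 1; 1, 0]
  | 2 => !![0, -Complex.I; Complex.I, 0]
  | 3 => !![1, 0; 0, -1]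

/-- The n-qubit Pauli operator indexed by `s : Fin n → Fin 4`, realized as the
tensor product of single-qubit Pauli matrices (entrywise product formula). -/
noncomputable def pauli {n : ℕ} (s : Fin n → Fin 4) :
    Matrix (Fin n → Fin 2) (Fin n → Fin 2) ℂ :=
  Matrix.of fun i j => ∏ k, pauli1 (s k) (i k) (j k)

/-- The Pauli coefficient `α_s = 2^{-n} Tr(A σ^s)`. -/
noncomputable def pauliCoeff {n : ℕ} (A : Matrix (Fin n → Fin 2) (Fin n → Fin 2) ℂ)
    (s : Fin n → Fin 4) : ℂ :=
  (A * pauli s).trace / 2 ^ n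

/-- Operator norm (largest singular value) of a matrix. -/
noncomputable def opNorm {m : Type*} [Fintype m] [DecidableEq m]
    (A : Matrix m m ℂ) : ℝ :=
  ‖Matrix.toEuclideanCLM (𝕜 := ℂ) A‖

/-- Trace norm `‖A‖₁ = Tr √(AᴴA)`. -/
noncomputable def traceNorm {m : Type*} [Fintype m] [DecidableEq m]
    (A : Matrix m m ℂ) : ℝ :=
  ((((Matrix.posSemidef_conjTranspose_mul_self A).1.eigenvectorUnitary : Matrix m m ℂ) *
      diagonal (((↑) : ℝ → ℂ) ∘ Real.sqrt ∘ (Matrix.posSemidef_conjTranspose_mul_self A).1.eigenvalues) *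
      (star (Matrix.posSemidef_conjTranspose_mul_self A).1.eigenvectorUnitary : Matrix m m ℂ)).trace).re

theorem trace_of_prod_mul_of_prod {κ m R : Type*} [Fintype κ] [DecidableEq κ] [Fintype m]
    [CommSemiring R] (A B : κ → Matrix m m R) :
    (of (fun i j : κ → m => ∏ k, A k (i k) (j k)) *
        of (fun i j : κ → m => ∏ k, B k (i k) (j k))).trace =
      ∏ k, (A k * B k).trace := by
  simp only [trace, diag_apply, mul_apply, of_apply,
    Finset.prod_univ_sum, Fintype.piFinset_univ, ← Finset.prod_mul_distrib]

theorem trace_pauli1_mul_pauli1 (a b : Fin 4) :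
    (pauli1 a * pauli1 b).trace = if a = b then 2 else 0 := by
  fin_cases a <;> fin_cases b <;>
    simp [pauli1, trace_fin_two, Complex.ext_iff] <;>
    norm_num

theorem trace_pauli_mul_pauli {n : ℕ} (t s : Fin n → Fin 4) :
    (pauli t * pauli s).trace = if t = s then 2 ^ n else 0 := by
  rw [pauli, pauli, trace_of_prod_mul_of_prod]
  simp_rw [trace_pauli1_mul_pauli1]
  split_ifs with h
  · simp [h]
  · obtain ⟨k, hk⟩ := Function.ne_iff.mp h
    exact Finset.prod_eq_zero (Finset.mem_univ k) (if_neg hk)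

theorem pauliCoeff_pauli {n : ℕ} (t s : Fin n → Fin 4) :
    pauliCoeff (pauli t) s = if t = s then 1 else 0 := by
  rw [pauliCoeff, trace_pauli_mul_pauli]
  split_ifs <;> simp

theorem pauliCoeff_add {n : ℕ} (A B : Matrix (Fin n → Fin 2) (Fin n → Fin 2) ℂ)
    (s : Fin n → Fin 4) :
    pauliCoeff (A + B) s = pauliCoeff A s + pauliCoeff B s := by
  simp only [pauliCoeff, add_mul, trace_add, add_div]

theorem pauliCoeff_sub {n : ℕ} (A B : Matrix (Fin n → Fin 2) (Fin n → Fin 2) ℂ)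
    (s : Fin n → Fin 4) :
    pauliCoeff (A - B) s = pauliCoeff A s - pauliCoeff B s := by
  simp only [pauliCoeff, sub_mul, trace_sub, sub_div]

theorem pauliCoeff_sum_smul_pauli {n : ℕ} (S : Finset (Fin n → Fin 4)) (c : (Fin n → Fin 4) → ℂ)
    (s : Fin n → Fin 4) :
    pauliCoeff (∑ t ∈ S, c t • pauli t) s = if s ∈ S then c s else 0 := by
  have hlin : pauliCoeff (∑ t ∈ S, c t • pauli t) s = ∑ t ∈ S, c t * pauliCoeff (pauli t) s := by
    simp only [pauliCoeff, Finset.sum_mul, smul_mul, trace_sum, trace_smul,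
      Finset.sum_div, smul_eq_mul, mul_div_assoc]
  simp [hlin, pauliCoeff_pauli]

theorem pauliCoeff_sub_sum_smul_pauli {n : ℕ} (A : Matrix (Fin n → Fin 2) (Fin n → Fin 2) ℂ)
    (S : Finset (Fin n → Fin 4)) (s : Fin n → Fin 4) :
    pauliCoeff (A - ∑ t ∈ S, pauliCoeff A t • pauli t) s =
      if s ∈ S then 0 else pauliCoeff A s := by
  rw [pauliCoeff_sub, pauliCoeff_sum_smul_pauli]
  split_ifs <;> simp

section Thresholding

open Finset

variable {ι E : Type*} [Fintype ι] [SeminormedAddCommGroup E]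

theorem card_filter_mul_le_sum_norm (α : ι → E) (τ : ℝ) :
    #{s | τ ≤ ‖α s‖} * τ ≤ ∑ s, ‖α s‖ := by
  calc (#{s | τ ≤ ‖α s‖} : ℝ) * τ = #{s | τ ≤ ‖α s‖} • τ := (nsmul_eq_mul _ _).symm
    _ ≤ ∑ s with τ ≤ ‖α s‖, ‖α s‖ :=
        card_nsmul_le_sum _ _ _ fun s hs => (mem_filter.mp hs).2
    _ ≤ ∑ s, ‖α s‖ := sum_le_sum_of_subset_of_nonneg (subset_univ _)
        fun s _ _ => norm_nonneg _

theorem sum_norm_ite_sq_le {τ : ℝ} (hτ : 0 ≤ τ) (α : ι → E) :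
    ∑ s, ‖if τ ≤ ‖α s‖ then 0 else α s‖ ^ 2 ≤ τ * ∑ s, ‖α s‖ := by
  rw [mul_sum]
  refine sum_le_sum fun s _ => ?_
  split_ifs with h
  · simpa using mul_nonneg hτ (norm_nonneg (α s))
  · rw [sq]
    exact mul_le_mul_of_nonneg_right (not_le.mp h).le (norm_nonneg _)

theorem sum_norm_add_sq_le (α β : ι → E) :
    ∑ s, ‖α s + β s‖ ^ 2 ≤ 2 * (∑ s, ‖α s‖ ^ 2 + ∑ s, ‖β s‖ ^ 2) := by
  rw [← sum_add_distrib, mul_sum]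
  refine sum_le_sum fun s _ => ?_
  calc ‖α s + β s‖ ^ 2 ≤ (‖α s‖ + ‖β s‖) ^ 2 := by gcongr; exact norm_add_le _ _
    _ ≤ 2 * (‖α s‖ ^ 2 + ‖β s‖ ^ 2) := add_sq_le

end Thresholding

theorem threshold_sparse_approx_general (n : ℕ)
    (U Ut : Matrix (Fin n → Fin 2) (Fin n → Fin 2) ℂ)
    (ε L₁ : ℝ) (hε : 0 < ε) (hL : 0 < L₁)
    (h2 : ∑ s : Fin n → Fin 4, ‖pauliCoeff (U - Ut) s‖ ^ 2 ≤ ε / 4)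
    (h1 : ∑ s : Fin n → Fin 4, ‖pauliCoeff Ut s‖ = L₁) :
    ∀ (S' : Finset (Fin n → Fin 4)),
      S' = Finset.univ.filter
          (fun s : Fin n → Fin 4 => ε / (4 * L₁) ≤ ‖pauliCoeff Ut s‖) →
      ∀ (V : Matrix (Fin n → Fin 2) (Fin n → Fin 2) ℂ),
        V = ∑ s ∈ S', pauliCoeff Ut s • pauli s →
        ((S'.card : ℝ) ≤ 4 * L₁ ^ 2 / ε) ∧
        (∑ s : Fin n → Fin 4, ‖pauliCoeff (Ut - V) s‖ ^ 2 ≤ ε / 4) ∧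
        (∑ s : Fin n → Fin 4, ‖pauliCoeff (U - V) s‖ ^ 2 ≤ ε) := by
  intro S' hS' V hV
  set τ := ε / (4 * L₁) with hτ_def
  have hτ : 0 < τ := by positivity
  have hτL : τ * L₁ = ε / 4 := by rw [hτ_def]; field_simp
  have htail : ∑ s, ‖pauliCoeff (Ut - V) s‖ ^ 2 ≤ ε / 4 := by
    simp only [hV, hS', pauliCoeff_sub_sum_smul_pauli, Finset.mem_filter, Finset.mem_univ, true_and]
    exact hτL ▸ h1 ▸ sum_norm_ite_sq_le hτ.le (pauliCoeff Ut)
  refine ⟨?_, htail, ?_⟩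
  · have hcard : (S'.card : ℝ) * τ ≤ L₁ :=
      hS' ▸ h1 ▸ card_filter_mul_le_sum_norm (pauliCoeff Ut) τ
    rw [le_div_iff₀ hε]
    calc (S'.card : ℝ) * ε = S'.card * τ * (4 * L₁) := by rw [hτ_def]; field_simp
      _ ≤ L₁ * (4 * L₁) := by gcongr
      _ = 4 * L₁ ^ 2 := by ring
  · calc ∑ s, ‖pauliCoeff (U - V) s‖ ^ 2
        = ∑ s, ‖pauliCoeff (U - Ut) s + pauliCoeff (Ut - V) s‖ ^ 2 := by
          simp only [← pauliCoeff_add, sub_add_sub_cancel]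
      _ ≤ 2 * (ε / 4 + ε / 4) := (sum_norm_add_sq_le _ _).trans (by gcongr)
      _ = ε := by ring

/-- Thresholding the Pauli coefficients of an ℓ1-bounded
approximant `Ũ` of a unitary `U` yields a `4L₁²/ε`-sparse operator `V` with
`‖Ũ − V‖_{2,P}² ≤ ε/4` and `‖U − V‖_{2,P}² ≤ ε`. -/
theorem threshold_sparse_approx (n : ℕ)
    (U Ut : Matrix (Fin n → Fin 2) (Fin n → Fin 2) ℂ)
    (hU : U ∈ Matrix.unitaryGroup (Fin n → Fin 2) ℂ)
    (ε L₁ : ℝ) (hε : 0 < ε) (hL : 0 < L₁)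
    (h2 : ∑ s : Fin n → Fin 4, ‖pauliCoeff (U - Ut) s‖ ^ 2 ≤ ε / 4)
    (h1 : ∑ s : Fin n → Fin 4, ‖pauliCoeff Ut s‖ = L₁) :
    ∀ (S' : Finset (Fin n → Fin 4)),
      S' = Finset.univ.filter
          (fun s : Fin n → Fin 4 => ε / (4 * L₁) ≤ ‖pauliCoeff Ut s‖) →
      ∀ (V : Matrix (Fin n → Fin 2) (Fin n → Fin 2) ℂ),
        V = ∑ s ∈ S', pauliCoeff Ut s • pauli s →
        ((S'.card : ℝ) ≤ 4 * L₁ ^ 2 / ε) ∧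
        (∑ s : Fin n → Fin 4, ‖pauliCoeff (Ut - V) s‖ ^ 2 ≤ ε / 4) ∧
        (∑ s : Fin n → Fin 4, ‖pauliCoeff (U - V) s‖ ^ 2 ≤ ε) :=
  threshold_sparse_approx_general n U Ut ε L₁ hε hL h2 h1
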